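/- Let c ≥ 2, m ∈ S_c, n = c+1, and consider the equivalence on S_{c+1} generated by replacing a contiguous c-letter factor whose standardization is a cyclic shift of m with a rearrangement of the same letters whose standardization is another cyclic shift of m. Then every non-avoider in S_{c+1} is equivalent to 1 ⇀ m or to 2 ⇀ m (where i ⇀ w increments letters of w that are ≥ i and prepends i). Consequently, there are at most two nontrivial equivalence classes in S_{c+1}. -/

import Mathlib

/-!
Write `m = l₁ i l₂` and `d = l₂ l₁`, so that `i d` and `d i` are rotations of `m`. Since `i ∉ d`,
the words `i ⇀ (d i)` and `(i d) ↼ (i + 1)` coincide letter by letter, so two moves (rotate the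
factor `m` of `i ⇀ m` to `d i`, then the factor `i d` back to `m`) lead from `i ⇀ m` to
`m ↼ (i + 1)`. Symmetrically `m ↼ j` is equivalent to `(j + 1) ⇀ m`, hence `i ⇀ m` to
`(i + 2) ⇀ m`, and by parity every `i ⇀ m` is equivalent to `1 ⇀ m` or `2 ⇀ m`. A non-avoider
of `S_{c+1}` is one letter `x` plus a factor of length `c`, so a single move replaces that factor
by `m` with its letters `≥ x` incremented, giving `x ⇀ m` or `m ↼ x`.
-/

/-- The standardization (order permutation) of a word with distinct letters. -/
def stdz (w : List ℕ) : List ℕ :=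
  w.map (fun x => 1 + w.countP (fun y => decide (y < x)))

/-- `u` is a cyclic shift of `m`. -/
def IsCyclicShiftOf (u m : List ℕ) : Prop := ∃ a ≤ m.length, u = m.rotate a

/-- One pattern-replacement move for the cyclic-shift relation attached to `m`. -/
def StepCyc (m : List ℕ) (φ ψ : List ℕ) : Prop :=
  ∃ a u v b : List ℕ, φ = a ++ u ++ b ∧ ψ = a ++ v ++ b ∧
    u.length = m.length ∧ u.Perm v ∧
    IsCyclicShiftOf (stdz u) m ∧ IsCyclicShiftOf (stdz v) m

/-- `w` contains a contiguous factor of length `|m|` whose standardization is a cyclic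
shift of `m`. -/
def NonAvoider (m w : List ℕ) : Prop :=
  ∃ i, i + m.length ≤ w.length ∧
    IsCyclicShiftOf (stdz ((w.drop i).take m.length)) m

/-- `i ⇀ w`: increment every letter of `w` that is `≥ i`, then prepend `i`. -/
def harpL (i : ℕ) (w : List ℕ) : List ℕ :=
  i :: w.map (fun x => if i ≤ x then x + 1 else x)

open Relation

def incGe (i x : ℕ) : ℕ := if i ≤ x then x + 1 else x

/-- `w ↼ i`: increment every letter of `w` that is `≥ i`, then append `i`. -/
def harpR (i : ℕ) (w : List ℕ) : List ℕ := w.map (incGe i) ++ [i]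

lemma harpL_eq (i : ℕ) (w : List ℕ) : harpL i w = [i] ++ w.map (incGe i) ++ [] := by
  simp [harpL, incGe]

lemma harpR_eq (i : ℕ) (w : List ℕ) : harpR i w = [] ++ w.map (incGe i) ++ [i] := by
  simp [harpR]

lemma incGe_strictMono (i : ℕ) : StrictMono (incGe i) := by
  intro a b h
  unfold incGe
  split_ifs <;> omega

lemma incGe_succ_of_ne {i x : ℕ} (h : x ≠ i) : incGe (i + 1) x = incGe i x := by
  unfold incGe
  split_ifs <;> omega

lemma map_incGe_succ_of_not_mem {i : ℕ} {d : List ℕ} (h : i ∉ d) :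
    d.map (incGe (i + 1)) = d.map (incGe i) :=
  List.map_congr_left fun _ hx => incGe_succ_of_ne (ne_of_mem_of_not_mem hx h)

lemma stdz_map_of_strictMono {f : ℕ → ℕ} (hf : StrictMono f) (w : List ℕ) :
    stdz (w.map f) = stdz w := by
  simp only [stdz, List.map_map, List.countP_map, Function.comp_def, hf.lt_iff_lt]

lemma countP_lt_range'_one (x n : ℕ) :
    (List.range' 1 n).countP (fun y => decide (y < x)) = min (x - 1) n := by
  induction n with
  | zero => simp
  | succ n ih =>
    rw [List.range'_concat, List.countP_append, ih]
    by_cases h : 1 + n < x <;> simp [h] <;> omega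

lemma mem_iff_of_perm_range' {c : ℕ} {m : List ℕ} (hm : m.Perm (List.range' 1 c)) {i : ℕ} :
    i ∈ m ↔ 1 ≤ i ∧ i ≤ c := by
  rw [hm.mem_iff, List.mem_range'_1]
  omega

lemma stdz_eq_self_of_perm_range' {c : ℕ} {p : List ℕ} (hp : p.Perm (List.range' 1 c)) :
    stdz p = p := by
  conv_rhs => rw [← List.map_id p]
  refine List.map_congr_left fun x hx => ?_
  have hx' := (mem_iff_of_perm_range' hp).mp hx
  rw [hp.countP_eq, countP_lt_range'_one]
  simp only [id]
  omega

lemma cons_map_incGe_perm_range'_succ {c x : ℕ} {p : List ℕ} (hp : p.Perm (List.range' 1 c))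
    (h₁ : 1 ≤ x) (h₂ : x ≤ c + 1) :
    (x :: p.map (incGe x)).Perm (List.range' 1 (c + 1)) := by
  have hnodup : (x :: p.map (incGe x)).Nodup := by
    refine List.nodup_cons.mpr ⟨fun hx => ?_, (hp.nodup_iff.mpr List.nodup_range').map
      (incGe_strictMono x).injective⟩
    obtain ⟨a, -, ha⟩ := List.mem_map.mp hx
    unfold incGe at ha
    split_ifs at ha <;> omega
  refine (List.perm_ext_iff_of_nodup hnodup List.nodup_range').mpr fun y => ?_
  simp only [List.mem_cons, List.mem_map, mem_iff_of_perm_range' hp, List.mem_range'_1, incGe]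
  constructor
  · rintro (rfl | ⟨a, ha, rfl⟩)
    · omega
    · split_ifs <;> omega
  · intro hy
    rcases lt_trichotomy y x with h | rfl | h
    · exact Or.inr ⟨y, by omega, by simp; omega⟩
    · exact Or.inl rfl
    · exact Or.inr ⟨y - 1, by omega, by split_ifs <;> omega⟩

lemma IsCyclicShiftOf.refl (m : List ℕ) : IsCyclicShiftOf m m :=
  ⟨0, Nat.zero_le _, (List.rotate_zero m).symm⟩

lemma IsCyclicShiftOf.perm {u m : List ℕ} (h : IsCyclicShiftOf u m) : u.Perm m := by
  obtain ⟨a, -, rfl⟩ := h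
  exact List.rotate_perm m a

lemma exists_cyclicShifts_of_mem {m : List ℕ} (hm : m.Nodup) {i : ℕ} (hi : i ∈ m) :
    ∃ d, i ∉ d ∧ IsCyclicShiftOf (i :: d) m ∧ IsCyclicShiftOf (d ++ [i]) m := by
  obtain ⟨l₁, l₂, rfl⟩ := List.append_of_mem hi
  refine ⟨l₂ ++ l₁, ?_, ⟨l₁.length, by simp, ?_⟩, ⟨l₁.length + 1, by simp, ?_⟩⟩
  · have := List.nodup_cons.mp (hm.perm List.perm_middle)
    simp only [List.mem_append] at this ⊢
    tauto
  · rw [List.rotate_eq_drop_append_take (by simp)]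
    simp
  · rw [List.rotate_eq_drop_append_take (by simp)]
    simp [List.take_append]

lemma NonAvoider.exists_factor {m w : List ℕ} (hlen : w.length = m.length + 1)
    (h : NonAvoider m w) :
    ∃ a t b x, w = a ++ t ++ b ∧ a ++ b = [x] ∧ IsCyclicShiftOf (stdz t) m := by
  obtain ⟨i, hi, ht⟩ := h
  obtain ⟨x, hx⟩ := List.length_eq_one_iff.mp
    (show (w.take i ++ w.drop (i + m.length)).length = 1 by simp; omega)
  refine ⟨w.take i, (w.drop i).take m.length, w.drop (i + m.length), x, ?_, hx, ht⟩
  rw [List.append_assoc, ← List.drop_drop, List.take_append_drop, List.take_append_drop]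

section

variable {c : ℕ} {m : List ℕ}

lemma eqvGen_stepCyc_map (hm : m.Perm (List.range' 1 c)) {p q : List ℕ}
    (hp : IsCyclicShiftOf p m) (hq : IsCyclicShiftOf q m) {f : ℕ → ℕ} (hf : StrictMono f)
    (a b : List ℕ) : EqvGen (StepCyc m) (a ++ p.map f ++ b) (a ++ q.map f ++ b) := by
  refine EqvGen.rel _ _ ⟨a, p.map f, q.map f, b, rfl, rfl, by simp [hp.perm.length_eq],
    (hp.perm.trans hq.perm.symm).map f, ?_, ?_⟩
  · rwa [stdz_map_of_strictMono hf, stdz_eq_self_of_perm_range' (hp.perm.trans hm)]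
  · rwa [stdz_map_of_strictMono hf, stdz_eq_self_of_perm_range' (hq.perm.trans hm)]

lemma harpL_eqvGen_harpR_succ (hm : m.Perm (List.range' 1 c)) {i : ℕ} (hi : i ∈ m) :
    EqvGen (StepCyc m) (harpL i m) (harpR (i + 1) m) := by
  obtain ⟨d, hid, hfront, hback⟩ :=
    exists_cyclicShifts_of_mem (hm.nodup_iff.mpr List.nodup_range') hi
  calc harpL i m = [i] ++ m.map (incGe i) ++ [] := harpL_eq i m
    EqvGen (StepCyc m) _ ([i] ++ (d ++ [i]).map (incGe i) ++ []) :=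
      eqvGen_stepCyc_map hm (.refl m) hback (incGe_strictMono i) _ _
    _ = [] ++ (i :: d).map (incGe (i + 1)) ++ [i + 1] := by
      simp [map_incGe_succ_of_not_mem hid, incGe]
    EqvGen (StepCyc m) _ ([] ++ m.map (incGe (i + 1)) ++ [i + 1]) :=
      eqvGen_stepCyc_map hm hfront (.refl m) (incGe_strictMono (i + 1)) _ _
    _ = harpR (i + 1) m := (harpR_eq _ m).symm

lemma harpR_eqvGen_harpL_succ (hm : m.Perm (List.range' 1 c)) {i : ℕ} (hi : i ∈ m) :
    EqvGen (StepCyc m) (harpR i m) (harpL (i + 1) m) := by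
  obtain ⟨d, hid, hfront, hback⟩ :=
    exists_cyclicShifts_of_mem (hm.nodup_iff.mpr List.nodup_range') hi
  calc harpR i m = [] ++ m.map (incGe i) ++ [i] := harpR_eq i m
    EqvGen (StepCyc m) _ ([] ++ (i :: d).map (incGe i) ++ [i]) :=
      eqvGen_stepCyc_map hm (.refl m) hfront (incGe_strictMono i) _ _
    _ = [i + 1] ++ (d ++ [i]).map (incGe (i + 1)) ++ [] := by
      simp [map_incGe_succ_of_not_mem hid, incGe]
    EqvGen (StepCyc m) _ ([i + 1] ++ m.map (incGe (i + 1)) ++ []) :=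
      eqvGen_stepCyc_map hm hback (.refl m) (incGe_strictMono (i + 1)) _ _
    _ = harpL (i + 1) m := (harpL_eq _ m).symm

lemma harpL_eqvGen_harpL_add_two (hm : m.Perm (List.range' 1 c)) {i : ℕ} (h₁ : 1 ≤ i)
    (h₂ : i + 1 ≤ c) : EqvGen (StepCyc m) (harpL i m) (harpL (i + 2) m) :=
  (harpL_eqvGen_harpR_succ hm ((mem_iff_of_perm_range' hm).mpr ⟨h₁, by omega⟩)).trans _ _ _
    (harpR_eqvGen_harpL_succ hm ((mem_iff_of_perm_range' hm).mpr ⟨by omega, h₂⟩))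

lemma harpL_eqvGen_harpL_add_two_mul (hm : m.Perm (List.range' 1 c)) {i : ℕ} (hi : 1 ≤ i)
    {k : ℕ} (hk : i + 2 * k ≤ c + 1) : EqvGen (StepCyc m) (harpL i m) (harpL (i + 2 * k) m) := by
  induction k with
  | zero => exact EqvGen.refl _
  | succ k ih =>
    exact (ih (by omega)).trans _ _ _ (harpL_eqvGen_harpL_add_two hm (by omega) (by omega))

lemma harpL_eqvGen_harpL_one_or_two (hm : m.Perm (List.range' 1 c)) {x : ℕ} (h₁ : 1 ≤ x)
    (h₂ : x ≤ c + 1) :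
    EqvGen (StepCyc m) (harpL x m) (harpL 1 m) ∨ EqvGen (StepCyc m) (harpL x m) (harpL 2 m) := by
  obtain ⟨k, rfl | rfl⟩ : ∃ k, x = 1 + 2 * k ∨ x = 2 + 2 * k := ⟨(x - 1) / 2, by omega⟩
  · exact .inl (harpL_eqvGen_harpL_add_two_mul hm le_rfl h₂).symm
  · exact .inr (harpL_eqvGen_harpL_add_two_mul hm one_le_two h₂).symm

lemma exists_harpL_eqvGen_harpR (hc : 1 ≤ c) (hm : m.Perm (List.range' 1 c)) {x : ℕ}
    (h₁ : 1 ≤ x) (h₂ : x ≤ c + 1) :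
    ∃ y, 1 ≤ y ∧ y ≤ c + 1 ∧ EqvGen (StepCyc m) (harpR x m) (harpL y m) := by
  rcases Nat.lt_or_ge x (c + 1) with hx | hx
  · exact ⟨x + 1, by omega, by omega,
      harpR_eqvGen_harpL_succ hm ((mem_iff_of_perm_range' hm).mpr ⟨h₁, by omega⟩)⟩
  · obtain rfl : x = c + 1 := by omega
    exact ⟨c, hc, by omega,
      (harpL_eqvGen_harpR_succ hm ((mem_iff_of_perm_range' hm).mpr ⟨hc, le_rfl⟩)).symm⟩

lemma stepCyc_of_factor (hm : m.Perm (List.range' 1 c))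
    {a t b : List ℕ} {x : ℕ} (hw : (a ++ t ++ b).Perm (List.range' 1 (c + 1)))
    (hab : a ++ b = [x]) (h₁ : 1 ≤ x) (h₂ : x ≤ c + 1) (ht : IsCyclicShiftOf (stdz t) m) :
    StepCyc m (a ++ t ++ b) (a ++ m.map (incGe x) ++ b) := by
  have hperm : t.Perm (m.map (incGe x)) := by
    refine (List.perm_cons x).mp ?_
    calc (x :: t).Perm (t ++ (a ++ b)) := hab ▸ (List.perm_append_singleton x t).symm
      _ = t ++ a ++ b := (List.append_assoc _ _ _).symm
      List.Perm _ (a ++ t ++ b) := List.perm_append_comm.append_right b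
      List.Perm _ (List.range' 1 (c + 1)) := hw
      List.Perm _ (x :: m.map (incGe x)) := (cons_map_incGe_perm_range'_succ hm h₁ h₂).symm
  refine ⟨a, t, m.map (incGe x), b, rfl, rfl, by simpa using hperm.length_eq, hperm, ht, ?_⟩
  rw [stdz_map_of_strictMono (incGe_strictMono x), stdz_eq_self_of_perm_range' hm]
  exact .refl m

lemma exists_eqvGen_harpL_of_factor (hc : 1 ≤ c) (hm : m.Perm (List.range' 1 c))
    {a t b : List ℕ} {x : ℕ}
    (hw : (a ++ t ++ b).Perm (List.range' 1 (c + 1))) (hab : a ++ b = [x])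
    (ht : IsCyclicShiftOf (stdz t) m) :
    ∃ y, 1 ≤ y ∧ y ≤ c + 1 ∧ EqvGen (StepCyc m) (a ++ t ++ b) (harpL y m) := by
  obtain ⟨h₁, h₂⟩ := (mem_iff_of_perm_range' hw).mp <| by
    have : x ∈ a ++ b := hab ▸ List.mem_singleton_self x
    simp only [List.mem_append] at this ⊢
    tauto
  have hstep := EqvGen.rel _ _ (stepCyc_of_factor hm hw hab h₁ h₂ ht)
  rcases List.append_eq_singleton_iff.mp hab with ⟨rfl, rfl⟩ | ⟨rfl, rfl⟩
  · obtain ⟨y, hy₁, hy₂, hy⟩ := exists_harpL_eqvGen_harpR hc hm h₁ h₂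
    exact ⟨y, hy₁, hy₂, hstep.trans _ _ _ (harpR_eq x m ▸ hy)⟩
  · exact ⟨x, h₁, h₂, harpL_eq x m ▸ hstep⟩

end

/-- For `m ∈ S_c` and `n = c + 1`: every non-avoider in `S_{c+1}` is equivalent to
`1 ⇀ m` or to `2 ⇀ m` under the cyclic-shift replacement relation attached to `m`;
consequently there are at most two nontrivial equivalence classes in `S_{c+1}`. -/
theorem stmt17 (c : ℕ) (hc : 2 ≤ c) (m : List ℕ) (hm : m.Perm (List.range' 1 c))
    (w : List ℕ) (hw : w.Perm (List.range' 1 (c + 1))) (hna : NonAvoider m w) :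
    Relation.EqvGen (StepCyc m) w (harpL 1 m) ∨
    Relation.EqvGen (StepCyc m) w (harpL 2 m) := by
  obtain ⟨a, t, b, x, rfl, hab, ht⟩ :=
    hna.exists_factor (by simp [hw.length_eq, hm.length_eq])
  obtain ⟨y, hy₁, hy₂, hy⟩ := exists_eqvGen_harpL_of_factor (by omega) hm hw hab ht
  exact (harpL_eqvGen_harpL_one_or_two hm hy₁ hy₂).imp (hy.trans _ _ _) (hy.trans _ _ _)
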